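/- Let S and T be trees of height ω₁ with S ≤ T. Then NS^T ≤_K NS^S; that is, there is a map f : S → T such that f⁻¹(A) ∈ NS^S for every A ∈ NS^T. -/

import Mathlib

open Set

/-- The first uncountable ordinal `ω₁`. -/
noncomputable def omega1 : Ordinal := Ordinal.omega 1

section TreeDefs

variable {T : Type*} [PartialOrder T]

/-- In a tree, the set of strict predecessors of any node is linearly ordered. -/
def PredsChain (T : Type*) [PartialOrder T] : Prop :=
  ∀ t : T, IsChain (· ≤ ·) {s : T | s < t}

/-- `ht` is *the* height function of the tree: it is strictly monotone on comparable pairs and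
the heights of the strict predecessors of `t` are exactly the ordinals below `ht t`; together
with `PredsChain` this says that the set `t↓` of strict predecessors of `t` is well-ordered
with order type `ht t`. -/
def IsHeightFun (ht : T → Ordinal) : Prop :=
  (∀ s t : T, s < t → ht s < ht t) ∧
  ∀ t : T, ∀ o : Ordinal, o < ht t → ∃ s : T, s < t ∧ ht s = o

/-- The tree has height `ω₁`: every node has height `< ω₁` and every countable ordinal is the
height of some node. -/
def HeightOmega1 (ht : T → Ordinal) : Prop :=
  (∀ t : T, ht t < omega1) ∧ ∀ o : Ordinal, o < omega1 → ∃ t : T, ht t = o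

/-- All levels of the tree are countable. -/
def CountableLevels (ht : T → Ordinal) : Prop :=
  ∀ o : Ordinal, {t : T | ht t = o}.Countable

/-- A tree of height `ω₁` is well-pruned if every node has successors in all later levels. -/
def WellPruned (ht : T → Ordinal) : Prop :=
  ∀ o o' : Ordinal, o < o' → o' < omega1 →
    ∀ s : T, ht s = o → ∃ t : T, s < t ∧ ht t = o'

/-- A special subset of a tree: a union of countably many antichains. -/
def IsSpecialSet (U : Set T) : Prop :=
  ∃ A : ℕ → Set T, (∀ n : ℕ, IsAntichain (· ≤ ·) (A n)) ∧ U ⊆ ⋃ n, A n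

/-- Membership in the ideal `NS^T`: there is a regressive map on `B` all of whose fibers
are special. -/
def InNS [OrderBot T] (B : Set T) : Prop :=
  ∃ f : T → T, (∀ t ∈ B, t ≠ ⊥ → f t < t) ∧
    ∀ t : T, IsSpecialSet {s : T | s ∈ B ∧ f s = t}

/-- The diamond principle `◊_T` for a tree `T`. -/
def DiamondTree (T : Type*) [PartialOrder T] [OrderBot T] : Prop :=
  ∃ D : T → Set T, (∀ t : T, D t ⊆ Set.Iio t) ∧
    ∀ X : Set T, ¬ InNS {t : T | X ∩ Set.Iio t = D t}

end TreeDefs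

/-- Club subsets of `ω₁`: closed and unbounded in `ω₁`. -/
def IsClubIn (C : Set Ordinal) : Prop :=
  C ⊆ Set.Iio omega1 ∧
  (∀ o : Ordinal, o < omega1 → ∃ b ∈ C, o < b) ∧
  ∀ o : Ordinal, o < omega1 → (C ∩ Set.Iio o).Nonempty →
    IsLUB (C ∩ Set.Iio o) o → o ∈ C

/-- Stationary subsets of `ω₁`: sets meeting every club. -/
def IsStationaryIn (S : Set Ordinal) : Prop :=
  ∀ C : Set Ordinal, IsClubIn C → (S ∩ C).Nonempty

/-- The diamond principle `◊(S)` for `S ⊆ ω₁`;  `◊` is `DiamondOn (Set.Iio omega1)`. -/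
def DiamondOn (S : Set Ordinal) : Prop :=
  ∃ D : Ordinal → Set Ordinal, (∀ o ∈ S, D o ⊆ Set.Iio o) ∧
    ∀ X : Set Ordinal, X ⊆ Set.Iio omega1 →
      IsStationaryIn {o ∈ S | X ∩ Set.Iio o = D o}

/-!
A strictly increasing `g : S → T` can be pushed down along the branches of `T` to a strictly
increasing `f` preserving heights (`f s` is the node below `g s` at the height of `s`).
Such an `f` maps `s↓` onto `(f s)↓`, so a regressive `h` on `A ⊆ T` pulls back to a regressive
`r` on `f ⁻¹' A` with `f (r s) = h (f s)`; the fibres of `r` are then, up to the root,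
preimages of fibres of `h`, and preimages of antichains under `f` are antichains.
-/

section Special

variable {S T : Type*} [PartialOrder S] [PartialOrder T]

lemma IsAntichain.preimage_strictMono {f : S → T} (hf : StrictMono f) {A : Set T}
    (hA : IsAntichain (· ≤ ·) A) : IsAntichain (· ≤ ·) (f ⁻¹' A) := fun _ ha _ hb hne hab =>
  have hlt := hf (hab.lt_of_ne hne)
  hA ha hb hlt.ne hlt.le

lemma IsSpecialSet.mono {U V : Set T} (hV : IsSpecialSet V) (hUV : U ⊆ V) : IsSpecialSet U :=
  let ⟨A, hA, hVA⟩ := hV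
  ⟨A, hA, hUV.trans hVA⟩

lemma IsSpecialSet.preimage {f : S → T} (hf : StrictMono f) {U : Set T} (hU : IsSpecialSet U) :
    IsSpecialSet (f ⁻¹' U) :=
  let ⟨A, hA, hUA⟩ := hU
  ⟨fun n => f ⁻¹' A n, fun n => (hA n).preimage_strictMono hf,
    fun s hs => by simpa using hUA hs⟩

lemma IsSpecialSet.insert {U : Set T} (hU : IsSpecialSet U) (a : T) :
    IsSpecialSet (insert a U) := by
  obtain ⟨A, hA, hUA⟩ := hU
  refine ⟨fun n => Nat.casesOn n {a} A, fun n => ?_, ?_⟩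
  · cases n with
    | zero => exact IsAntichain.singleton
    | succ n => exact hA n
  · rintro s (rfl | hs)
    · exact mem_iUnion.2 ⟨0, rfl⟩
    · obtain ⟨n, hn⟩ := mem_iUnion.1 (hUA hs)
      exact mem_iUnion.2 ⟨n + 1, hn⟩

lemma InNS.preimage [OrderBot S] [OrderBot T] {f : S → T} (hf : StrictMono f)
    (hf_down : ∀ s, Iio (f s) ⊆ f '' Iio s) {A : Set T} (hA : InNS A) : InNS (f ⁻¹' A) := by
  classical
  obtain ⟨h, h_reg, h_fib⟩ := hA
  have h_lift : ∀ s, ∃ p, s ∈ f ⁻¹' A → s ≠ ⊥ → p < s ∧ f p = h (f s) := fun s => by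
    by_cases hs : s ∈ f ⁻¹' A ∧ s ≠ ⊥
    · have hfs : f s ≠ ⊥ := (bot_le.trans_lt (hf (bot_lt_iff_ne_bot.2 hs.2))).ne'
      obtain ⟨p, hp, hfp⟩ := hf_down s (h_reg _ hs.1 hfs)
      exact ⟨p, fun _ _ => ⟨hp, hfp⟩⟩
    · exact ⟨⊥, fun h₁ h₂ => absurd ⟨h₁, h₂⟩ hs⟩
  choose r hr using h_lift
  refine ⟨r, fun s hs hs_bot => (hr s hs hs_bot).1, fun t => ?_⟩
  refine ((h_fib (f t)).preimage hf).insert ⊥ |>.mono ?_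
  rintro s ⟨hs, rfl⟩
  by_cases hs_bot : s = ⊥
  · exact Or.inl hs_bot
  · exact Or.inr ⟨hs, (hr s hs hs_bot).2.symm⟩

end Special

section Height

universe u v

variable {S T : Type*} [PartialOrder S] [PartialOrder T]

lemma IsHeightFun.strictMono {ht : T → Ordinal} (hht : IsHeightFun ht) : StrictMono ht :=
  fun s t => hht.1 s t

lemma IsHeightFun.lift {ht : T → Ordinal.{u}} (h : IsHeightFun ht) :
    IsHeightFun fun t => Ordinal.lift.{v} (ht t) := by
  refine ⟨fun s t hst => Ordinal.lift_lt.2 (h.strictMono hst), fun t o ho => ?_⟩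
  obtain ⟨o', ho', rfl⟩ := Ordinal.lt_lift_iff.1 ho
  obtain ⟨s, hs, rfl⟩ := h.2 t o' ho'
  exact ⟨s, hs, rfl⟩

lemma PredsChain.le_total_of_le (hchain : PredsChain T) {a x y : T} (hx : x ≤ a) (hy : y ≤ a) :
    x ≤ y ∨ y ≤ x := by
  rcases hx.eq_or_lt with rfl | hx
  · exact Or.inr hy
  rcases hy.eq_or_lt with rfl | hy
  · exact Or.inl hx.le
  rcases eq_or_ne x y with rfl | hne
  · exact Or.inl le_rfl
  exact hchain a hx hy hne

lemma IsHeightFun.eq_of_le_of_le (hchain : PredsChain T) {ht : T → Ordinal} (hht : IsHeightFun ht)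
    {a x y : T} (hx : x ≤ a) (hy : y ≤ a) (hxy : ht x = ht y) : x = y := by
  rcases hchain.le_total_of_le hx hy with h | h
  · exact h.eq_of_not_lt fun h => (hht.strictMono h).ne hxy
  · exact (h.eq_of_not_lt fun h => (hht.strictMono h).ne' hxy).symm

lemma IsHeightFun.le_comp_of_strictMono {htS : S → Ordinal.{u}} {htT : T → Ordinal.{u}}
    (hS : IsHeightFun htS) (hT : IsHeightFun htT) {g : S → T} (hg : StrictMono g) (s : S) :
    htS s ≤ htT (g s) := by
  induction h : htS s using WellFoundedLT.induction generalizing s with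
  | _ o ih =>
    subst h
    refine le_of_forall_lt fun o ho => ?_
    obtain ⟨p, hps, rfl⟩ := hS.2 s o ho
    exact (ih _ ho p rfl).trans_lt (hT.strictMono (hg hps))

lemma exists_strictMono_comp_eq (hchainT : PredsChain T) {htS : S → Ordinal.{u}}
    {htT : T → Ordinal.{u}} (hS : IsHeightFun htS) (hT : IsHeightFun htT) {g : S → T}
    (hg : StrictMono g) : ∃ f : S → T, StrictMono f ∧ htT ∘ f = htS := by
  have h_below : ∀ s, ∃ x, x ≤ g s ∧ htT x = htS s := fun s => by
    rcases (hS.le_comp_of_strictMono hT hg s).lt_or_eq with h | h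
    · obtain ⟨x, hx, hxs⟩ := hT.2 _ _ h
      exact ⟨x, hx.le, hxs⟩
    · exact ⟨g s, le_rfl, h.symm⟩
  choose f hfg hf_ht using h_below
  refine ⟨f, fun s s' hss' => ?_, funext hf_ht⟩
  have h_ht : htT (f s) < htT (f s') := by
    rw [hf_ht, hf_ht]
    exact hS.strictMono hss'
  rcases hchainT.le_total_of_le ((hfg s).trans (hg hss').le) (hfg s') with h | h
  · exact h.lt_of_ne fun h => h_ht.ne (congrArg htT h)
  · exact absurd (hT.strictMono.monotone h) h_ht.not_ge

lemma StrictMono.Iio_subset_image_of_comp_eq (hchainT : PredsChain T) {htS : S → Ordinal.{u}}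
    {htT : T → Ordinal.{u}} (hS : IsHeightFun htS) (hT : IsHeightFun htT) {f : S → T}
    (hf : StrictMono f) (hf_ht : htT ∘ f = htS) (s : S) : Iio (f s) ⊆ f '' Iio s := by
  intro x hx
  have h_ht : htT x < htS s := hf_ht ▸ hT.strictMono hx
  obtain ⟨p, hp, hpx⟩ := hS.2 s _ h_ht
  refine ⟨p, hp, hT.eq_of_le_of_le hchainT (hf hp).le hx.le ?_⟩
  rw [← hpx, ← hf_ht, Function.comp_apply]

lemma exists_strictMono_Iio_subset_image (hchainT : PredsChain T) {htS : S → Ordinal.{u}}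
    {htT : T → Ordinal.{v}} (hS : IsHeightFun htS) (hT : IsHeightFun htT) {g : S → T}
    (hg : StrictMono g) : ∃ f : S → T, StrictMono f ∧ ∀ s, Iio (f s) ⊆ f '' Iio s := by
  obtain ⟨f, hf, hf_ht⟩ := exists_strictMono_comp_eq hchainT hS.lift.{_, v} hT.lift.{_, u} hg
  exact ⟨f, hf, hf.Iio_subset_image_of_comp_eq hchainT hS.lift hT.lift hf_ht⟩

end Height

theorem stmt6_general {S T : Type*} [PartialOrder S] [OrderBot S] [PartialOrder T] [OrderBot T]
    (htS : S → Ordinal)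
    (hhtS : IsHeightFun htS)
    (hchainT : PredsChain T) (htT : T → Ordinal)
    (hhtT : IsHeightFun htT)
    (hle : ∃ g : S → T, StrictMono g) :
    ∃ f : S → T, ∀ A : Set T, InNS A → InNS (f ⁻¹' A) := by
  obtain ⟨g, hg⟩ := hle
  obtain ⟨f, hf, hf_down⟩ := exists_strictMono_Iio_subset_image hchainT hhtS hhtT hg
  exact ⟨f, fun A hA => hA.preimage hf hf_down⟩

/-- If `S` and `T` are trees of height `ω₁` with `S ≤ T`
(there is a strictly increasing map from `S` to `T`), then `NS^T ≤_K NS^S`: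
there is a map `f : S → T` such that `f ⁻¹' A ∈ NS^S` for every `A ∈ NS^T`. -/
theorem stmt6 {S T : Type*} [PartialOrder S] [OrderBot S] [PartialOrder T] [OrderBot T]
    (hchainS : PredsChain S) (htS : S → Ordinal)
    (hhtS : IsHeightFun htS) (hΩS : HeightOmega1 htS)
    (hchainT : PredsChain T) (htT : T → Ordinal)
    (hhtT : IsHeightFun htT) (hΩT : HeightOmega1 htT)
    (hle : ∃ g : S → T, StrictMono g) :
    ∃ f : S → T, ∀ A : Set T, InNS A → InNS (f ⁻¹' A) :=
  stmt6_general htS hhtS hchainT htT hhtT hle
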